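/- Let t ≥ 4 and m ≥ 2 be integers, and let 1 ≤ r ≤ ⌊t/2⌋. Let λ^r be the partition whose β-set is ( {k·t + (t−1) : 0 ≤ k ≤ m−2} if m ≥ 2 ) ∪ ⋃_{j=2}^{r} { k·t + (t+1−2j) : 0 ≤ k ≤ m−1 }. Then λ^r is a (t, mt−1)-core partition with distinct parts, and its size equals −r²·(m²+2m)/2 + r·(m²t+mt+3m)/2 − mt. -/

import Mathlib

/-!
Every finite set of positive integers is the β-set of a partition, and each hook length in row
`i` has the form `β_i - x` with `x ∉ β`. So a β-set closed under `x ↦ x - t` gives a `t`-core and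
a β-set below `s` gives an `s`-core; the parts are distinct as soon as the β-set contains no
two consecutive integers; and the size is `Σ β - ℓ(ℓ - 1)/2`. The β-set of `λ^r` is a disjoint
union of arithmetic progressions of step `t` starting at `t - 1, t - 3, …, t + 1 - 2r`, all below
`mt - 1`: it is closed under subtracting `t`, its residues mod `t` are nonzero of the parity of
`t - 1`, and its sum is computed progression by progression.
-/

/-- A partition: a finite weakly decreasing list of positive integers. -/
structure Partn where
  parts : List ℕ
  pos : ∀ p ∈ parts, 0 < p
  sorted : parts.Pairwise (· ≥ ·)

namespace Partn

/-- The size of a partition: the sum of its parts. -/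
def size (l : Partn) : ℕ := l.parts.sum

/-- The number of rows `k` (0-indexed) with `λ_k ≥ j` (the length of column `j`). -/
def colLen (l : Partn) (j : ℕ) : ℕ := (l.parts.filter (fun p => j ≤ p)).length

/-- The hook length of the box in row `i` (0-indexed) and column `j` (1-indexed):
`λ_i − j + #{k : λ_k ≥ j} − i + 1` (with 1-indexed rows). -/
def hook (l : Partn) (i j : ℕ) : ℕ :=
  (l.parts.getD i 0 - j) + (l.colLen j - (i + 1)) + 1

/-- A partition is a `t`-core if none of its hook lengths is divisible by `t`. -/
def IsCore (t : ℕ) (l : Partn) : Prop :=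
  ∀ i j : ℕ, i < l.parts.length → 1 ≤ j → j ≤ l.parts.getD i 0 → ¬ (t ∣ l.hook i j)

/-- A partition has distinct parts if its parts are strictly decreasing. -/
def DistinctParts (l : Partn) : Prop := l.parts.Pairwise (· > ·)

/-- The β-set of a partition: `{λ_i + ℓ − i : 1 ≤ i ≤ ℓ}` (1-indexed). -/
def betaSet (l : Partn) : Finset ℕ :=
  (Finset.range l.parts.length).image
    (fun i => l.parts.getD i 0 + (l.parts.length - 1 - i))

/-- `nFn t i l` is the number of elements of the β-set of `l` congruent to `i` mod `t`. -/
def nFn (t i : ℕ) (l : Partn) : ℕ :=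
  (l.betaSet.filter (fun x => x % t = i)).card

end Partn

theorem List.sum_eq_sum_range_getD (l : List ℕ) :
    l.sum = ∑ i ∈ Finset.range l.length, l.getD i 0 := by
  conv_lhs => rw [← List.ofFn_getElem (xs := l)]
  rw [List.sum_ofFn, ← Fin.sum_univ_eq_sum_range]
  refine Finset.sum_congr rfl fun i _ => ?_
  simp [List.getD_eq_getElem?_getD]

theorem List.Pairwise.lt_length_filter_le_iff {l : List ℕ} (hl : l.Pairwise (· ≥ ·))
    {j k : ℕ} (hk : k < l.length) : k < (l.filter (j ≤ ·)).length ↔ j ≤ l[k] := by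
  induction l generalizing k with
  | nil => simp at hk
  | cons a l ih =>
    rw [List.pairwise_cons] at hl
    by_cases hja : j ≤ a
    · cases k with
      | zero => simp [hja]
      | succ k => simp [hja, ih hl.2 (Nat.lt_of_succ_lt_succ hk)]
    · have hnil : l.filter (j ≤ ·) = [] :=
        List.filter_eq_nil_iff.2 fun b hb => by
          have := hl.1 b hb
          simp only [decide_eq_true_eq, not_le]
          omega
      cases k with
      | zero => simp [hja, hnil]
      | succ k =>
        have := hl.1 _ (List.getElem_mem (Nat.lt_of_succ_lt_succ hk))
        rw [List.filter_cons_of_neg (by simpa using hja), hnil, List.length_nil,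
          List.getElem_cons_succ]
        omega

theorem Nat.add_mul_sub_le_of_forall_succ_add_le {f : ℕ → ℕ} {n d : ℕ}
    (h : ∀ i, i + 1 < n → f (i + 1) + d ≤ f i) {i j : ℕ} (hij : i ≤ j) (hj : j < n) :
    f j + d * (j - i) ≤ f i := by
  induction j, hij using Nat.le_induction with
  | base => simp
  | succ j hij ih =>
    have hstep := h j hj
    rw [Nat.sub_add_comm hij, mul_add_one]
    have := ih (by omega)
    omega

namespace Partn

def beta (l : Partn) (i : ℕ) : ℕ := l.parts.getD i 0 + (l.parts.length - 1 - i)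

theorem betaSet_eq_image (l : Partn) :
    l.betaSet = (Finset.range l.parts.length).image l.beta := rfl

theorem mem_betaSet {l : Partn} {x : ℕ} :
    x ∈ l.betaSet ↔ ∃ i < l.parts.length, l.beta i = x := by
  simp [betaSet_eq_image]

theorem beta_mem_betaSet (l : Partn) {i : ℕ} (hi : i < l.parts.length) : l.beta i ∈ l.betaSet :=
  mem_betaSet.2 ⟨i, hi, rfl⟩

theorem getD_le_getD (l : Partn) {i j : ℕ} (hij : i ≤ j) (hj : j < l.parts.length) :
    l.parts.getD j 0 ≤ l.parts.getD i 0 := by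
  rcases hij.eq_or_lt with rfl | hij
  · rfl
  · rw [List.getD_eq_getElem _ _ hj, List.getD_eq_getElem _ _ (hij.trans hj)]
    exact List.pairwise_iff_getElem.1 l.sorted i j (hij.trans hj) hj hij

theorem beta_lt_beta (l : Partn) {i j : ℕ} (hij : i < j) (hj : j < l.parts.length) :
    l.beta j < l.beta i := by
  have := l.getD_le_getD hij.le hj
  unfold beta
  omega

theorem injOn_beta (l : Partn) : Set.InjOn l.beta (Finset.range l.parts.length) := by
  intro i hi j hj hij
  simp only [Finset.coe_range, Set.mem_Iio] at hi hj
  by_contra hne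
  rcases Nat.lt_or_gt_of_ne hne with h | h
  · exact (l.beta_lt_beta h hj).ne' hij
  · exact (l.beta_lt_beta h hi).ne hij

theorem sum_betaSet (l : Partn) :
    ∑ x ∈ l.betaSet, x = l.size + ∑ i ∈ Finset.range l.parts.length, i := by
  rw [betaSet_eq_image, Finset.sum_image l.injOn_beta, size, List.sum_eq_sum_range_getD,
    ← Finset.sum_range_reflect (fun i => i)]
  exact Finset.sum_add_distrib

theorem lt_colLen_iff (l : Partn) {j k : ℕ} (hk : k < l.parts.length) :
    k < l.colLen j ↔ j ≤ l.parts.getD k 0 := by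
  rw [colLen, List.getD_eq_getElem _ _ hk]
  exact l.sorted.lt_length_filter_le_iff hk

theorem exists_add_hook_eq_beta (l : Partn) {i j : ℕ} (hi : i < l.parts.length)
    (hj : j ≤ l.parts.getD i 0) (hj1 : 1 ≤ j) :
    ∃ x ∉ l.betaSet, x + l.hook i j = l.beta i := by
  have hic := (l.lt_colLen_iff hi).2 hj
  have hcl : l.colLen j ≤ l.parts.length := List.length_filter_le _ _
  refine ⟨(j - 1) + (l.parts.length - l.colLen j), fun hx => ?_, by unfold hook beta; omega⟩
  obtain ⟨k, hk, hkx⟩ := mem_betaSet.1 hx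
  have := l.lt_colLen_iff (j := j) hk
  unfold beta at hkx
  omega

theorem isCore_of_sub_mem (l : Partn) (t : ℕ)
    (h : ∀ b ∈ l.betaSet, t ≤ b → b - t ∈ l.betaSet) : l.IsCore t := by
  have sub_mul_mem : ∀ d, ∀ b ∈ l.betaSet, t * d ≤ b → b - t * d ∈ l.betaSet := by
    intro d
    induction d with
    | zero => simp
    | succ d ih =>
      intro b hb hd
      rw [mul_add_one, ← Nat.sub_sub]
      exact h _ (ih b hb (by linarith)) (Nat.le_sub_of_add_le (by linarith))
  rintro i j hi hj1 hj ⟨d, hd⟩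
  obtain ⟨x, hx, hxb⟩ := l.exists_add_hook_eq_beta hi hj hj1
  refine hx ?_
  convert sub_mul_mem d _ (l.beta_mem_betaSet hi) (by omega) using 1
  omega

theorem isCore_of_lt (l : Partn) (s : ℕ) (h : ∀ b ∈ l.betaSet, b < s) : l.IsCore s := by
  intro i j hi hj1 hj hdvd
  obtain ⟨x, -, hxb⟩ := l.exists_add_hook_eq_beta hi hj hj1
  have hpos : 0 < l.hook i j := Nat.succ_pos _
  have := Nat.le_of_dvd hpos hdvd
  have := h _ (l.beta_mem_betaSet hi)
  omega

theorem distinctParts_of_add_one_notMem (l : Partn)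
    (h : ∀ b ∈ l.betaSet, b + 1 ∉ l.betaSet) : l.DistinctParts := by
  have hstep : ∀ i, i + 1 < l.parts.length →
      l.parts.getD (i + 1) 0 + 1 ≤ l.parts.getD i 0 := by
    intro i hi
    have hlt := l.beta_lt_beta i.lt_add_one hi
    have hne : l.beta (i + 1) + 1 ≠ l.beta i := fun heq =>
      h _ (l.beta_mem_betaSet hi) (heq ▸ l.beta_mem_betaSet (by omega))
    unfold beta at hlt hne
    omega
  refine List.pairwise_iff_getElem.2 fun i j hi hj hij => ?_
  have := Nat.add_mul_sub_le_of_forall_succ_add_le (f := (l.parts.getD · 0)) hstep hij.le hj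
  rw [← List.getD_eq_getElem _ 0 hi, ← List.getD_eq_getElem _ 0 hj]
  omega

section OfBetaSet

variable {S : Finset ℕ}

theorem sort_getD_mem {i : ℕ} (hi : i < S.card) : (S.sort (· ≥ ·)).getD i 0 ∈ S := by
  rw [← Finset.length_sort (· ≥ ·)] at hi
  rw [List.getD_eq_getElem _ _ hi, ← Finset.mem_sort (· ≥ ·)]
  exact List.getElem_mem hi

theorem sort_getD_succ_lt {i : ℕ} (hi : i + 1 < S.card) :
    (S.sort (· ≥ ·)).getD (i + 1) 0 < (S.sort (· ≥ ·)).getD i 0 := by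
  rw [← Finset.length_sort (· ≥ ·)] at hi
  rw [List.getD_eq_getElem _ _ hi, List.getD_eq_getElem _ _ (by omega)]
  exact (Finset.sortedGT_sort S).getElem_gt_getElem_of_lt i.lt_add_one

theorem sort_getD_add_sub_le {i j : ℕ} (hij : i ≤ j) (hj : j < S.card) :
    (S.sort (· ≥ ·)).getD j 0 + (j - i) ≤ (S.sort (· ≥ ·)).getD i 0 := by
  simpa using Nat.add_mul_sub_le_of_forall_succ_add_le (f := ((S.sort (· ≥ ·)).getD · 0))
    (d := 1) (fun i hi => sort_getD_succ_lt hi) hij hj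

theorem card_sub_le_sort_getD (hS : 0 ∉ S) {i : ℕ} (hi : i < S.card) :
    S.card - i ≤ (S.sort (· ≥ ·)).getD i 0 := by
  have hlast := sort_getD_mem (S := S) (i := S.card - 1) (by omega)
  have hpos : (S.sort (· ≥ ·)).getD (S.card - 1) 0 ≠ 0 := fun h => hS (h ▸ hlast)
  have := sort_getD_add_sub_le (S := S) (Nat.le_sub_one_of_lt hi) (by omega)
  omega

def ofBetaSet (S : Finset ℕ) (hS : 0 ∉ S) : Partn where
  parts := List.ofFn fun i : Fin S.card => (S.sort (· ≥ ·)).getD i 0 - (S.card - 1 - i)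
  pos := by
    simp only [List.mem_ofFn, forall_exists_index, forall_apply_eq_imp_iff]
    intro i
    have := card_sub_le_sort_getD hS i.2
    omega
  sorted := by
    refine List.pairwise_ofFn.2 fun i j hij => ?_
    have := sort_getD_add_sub_le (S := S) hij.le j.2
    have := card_sub_le_sort_getD hS j.2
    omega

theorem length_ofBetaSet (hS : 0 ∉ S) : (ofBetaSet S hS).parts.length = S.card :=
  List.length_ofFn

theorem beta_ofBetaSet (hS : 0 ∉ S) {i : ℕ} (hi : i < S.card) :
    (ofBetaSet S hS).beta i = (S.sort (· ≥ ·)).getD i 0 := by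
  have := card_sub_le_sort_getD hS hi
  rw [beta, length_ofBetaSet, List.getD_eq_getElem _ _ (by rwa [length_ofBetaSet])]
  simp only [ofBetaSet, List.getElem_ofFn]
  omega

theorem betaSet_ofBetaSet (hS : 0 ∉ S) : (ofBetaSet S hS).betaSet = S := by
  ext x
  simp only [mem_betaSet, length_ofBetaSet]
  constructor
  · rintro ⟨i, hi, rfl⟩
    exact beta_ofBetaSet hS hi ▸ sort_getD_mem hi
  · intro hx
    obtain ⟨i, hi, rfl⟩ := List.mem_iff_getElem.1 ((Finset.mem_sort (· ≥ ·)).2 hx)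
    rw [Finset.length_sort] at hi
    exact ⟨i, hi, by rw [beta_ofBetaSet hS hi, List.getD_eq_getElem]⟩

end OfBetaSet

end Partn

theorem Finset.sum_range_natCast_id (n : ℕ) :
    ∑ i ∈ Finset.range n, (i : ℚ) = n * (n - 1) / 2 := by
  induction n with
  | zero => simp
  | succ n ih =>
    rw [Finset.sum_range_succ, ih]
    push_cast
    ring

def progression (t c n : ℕ) : Finset ℕ := (Finset.range n).image fun k => k * t + c

section Progression

variable {t c n x : ℕ}

theorem mod_eq_of_mem_progression (hc : c < t) (hx : x ∈ progression t c n) : x % t = c := by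
  obtain ⟨k, -, rfl⟩ := Finset.mem_image.1 hx
  rw [Nat.mul_add_mod_self_right, Nat.mod_eq_of_lt hc]

theorem sub_mem_progression (hc : c < t) (hx : x ∈ progression t c n) (htx : t ≤ x) :
    x - t ∈ progression t c n := by
  obtain ⟨k, hk, rfl⟩ := Finset.mem_image.1 hx
  rcases k with _ | k
  · rw [zero_mul, zero_add] at htx
    omega
  · refine Finset.mem_image.2 ⟨k, by simp only [Finset.mem_range] at hk ⊢; omega, ?_⟩
    rw [add_one_mul, add_right_comm, Nat.add_sub_cancel]

theorem add_le_of_mem_progression (hx : x ∈ progression t c n) : x + t ≤ n * t + c := by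
  obtain ⟨k, hk, rfl⟩ := Finset.mem_image.1 hx
  have : (k + 1) * t ≤ n * t := Nat.mul_le_mul_right t (Finset.mem_range.1 hk)
  rw [add_one_mul] at this
  omega

theorem disjoint_progression {c' n' : ℕ} (hc : c < t) (hc' : c' < t) (hcc' : c ≠ c') :
    Disjoint (progression t c n) (progression t c' n') :=
  Finset.disjoint_left.2 fun _ hx hx' =>
    hcc' ((mod_eq_of_mem_progression hc hx).symm.trans (mod_eq_of_mem_progression hc' hx'))

theorem injective_progression (ht : 0 < t) : Function.Injective fun k => k * t + c :=
  fun _ _ h => Nat.eq_of_mul_eq_mul_right ht (Nat.add_right_cancel h)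

theorem card_progression (ht : 0 < t) : (progression t c n).card = n := by
  rw [progression, Finset.card_image_of_injective _ (injective_progression ht), Finset.card_range]

theorem sum_progression (ht : 0 < t) :
    ∑ x ∈ progression t c n, (x : ℚ) = t * (n * (n - 1) / 2) + n * c := by
  rw [progression, Finset.sum_image fun _ _ _ _ h => injective_progression ht h]
  push_cast
  rw [Finset.sum_add_distrib, ← Finset.sum_mul, Finset.sum_range_natCast_id,
    Finset.sum_const, Finset.card_range, nsmul_eq_mul]
  ring

end Progression

def lambdaBetaSet (t m r : ℕ) : Finset ℕ :=
  progression t (t - 1) (m - 1) ∪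
    (Finset.Icc 2 r).biUnion fun j => progression t (t + 1 - 2 * j) m

section LambdaBetaSet

variable {t m r x : ℕ}

theorem exists_mod_add_eq_of_mem_lambdaBetaSet (hr1 : 1 ≤ r) (hrt : 2 * r ≤ t)
    (hx : x ∈ lambdaBetaSet t m r) : ∃ i < r, x % t + 2 * i + 1 = t := by
  rcases Finset.mem_union.1 hx with hx | hx
  · exact ⟨0, hr1, by rw [mod_eq_of_mem_progression (by omega) hx]; omega⟩
  · obtain ⟨j, hj, hx⟩ := Finset.mem_biUnion.1 hx
    rw [Finset.mem_Icc] at hj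
    exact ⟨j - 1, by omega, by rw [mod_eq_of_mem_progression (by omega) hx]; omega⟩

theorem zero_notMem_lambdaBetaSet (hr1 : 1 ≤ r) (hrt : 2 * r ≤ t) :
    0 ∉ lambdaBetaSet t m r := fun h0 => by
  obtain ⟨i, hi, h⟩ := exists_mod_add_eq_of_mem_lambdaBetaSet hr1 hrt h0
  rw [Nat.zero_mod] at h
  omega

theorem add_one_notMem_lambdaBetaSet (hr1 : 1 ≤ r) (hrt : 2 * r ≤ t)
    (hx : x ∈ lambdaBetaSet t m r) : x + 1 ∉ lambdaBetaSet t m r := fun hx' => by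
  obtain ⟨i, hi, h⟩ := exists_mod_add_eq_of_mem_lambdaBetaSet hr1 hrt hx
  obtain ⟨i', hi', h'⟩ := exists_mod_add_eq_of_mem_lambdaBetaSet hr1 hrt hx'
  rw [Nat.add_mod, Nat.one_mod_eq_one.2 (by omega)] at h'
  have hmod := Nat.mod_lt x (show 0 < t by omega)
  rcases (show x % t + 1 < t ∨ x % t + 1 = t by omega) with hlt | heq
  · rw [Nat.mod_eq_of_lt hlt] at h'
    omega
  · rw [heq, Nat.mod_self] at h'
    omega

theorem sub_mem_lambdaBetaSet (ht : 0 < t) (hx : x ∈ lambdaBetaSet t m r) (htx : t ≤ x) :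
    x - t ∈ lambdaBetaSet t m r := by
  rcases Finset.mem_union.1 hx with hx | hx
  · exact Finset.mem_union_left _ (sub_mem_progression (by omega) hx htx)
  · obtain ⟨j, hj, hx⟩ := Finset.mem_biUnion.1 hx
    have hj2 := (Finset.mem_Icc.1 hj).1
    exact Finset.mem_union_right _
      (Finset.mem_biUnion.2 ⟨j, hj, sub_mem_progression (by omega) hx htx⟩)

theorem lt_of_mem_lambdaBetaSet (hm : 1 ≤ m) (hr1 : 1 ≤ r) (hrt : 2 * r ≤ t)
    (hx : x ∈ lambdaBetaSet t m r) : x < m * t - 1 := by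
  have hmt : (m - 1) * t + t = m * t := by rw [← add_one_mul, Nat.sub_add_cancel hm]
  rcases Finset.mem_union.1 hx with hx | hx
  · have := add_le_of_mem_progression hx
    omega
  · obtain ⟨j, hj, hx⟩ := Finset.mem_biUnion.1 hx
    have := add_le_of_mem_progression hx
    rw [Finset.mem_Icc] at hj
    omega

theorem sum_lambdaBetaSet {M : Type*} [AddCommMonoid M] (f : ℕ → M) (ht : 0 < t)
    (hrt : 2 * r ≤ t) :
    ∑ x ∈ lambdaBetaSet t m r, f x = ∑ x ∈ progression t (t - 1) (m - 1), f x +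
      ∑ j ∈ Finset.Icc 2 r, ∑ x ∈ progression t (t + 1 - 2 * j) m, f x := by
  have hdisj : ∀ j ∈ Finset.Icc 2 r, ∀ j' ∈ Finset.Icc 2 r, j ≠ j' →
      Disjoint (progression t (t + 1 - 2 * j) m) (progression t (t + 1 - 2 * j') m) := by
    intro j hj j' hj' hne
    rw [Finset.mem_Icc] at hj hj'
    exact disjoint_progression (by omega) (by omega) (by omega)
  rw [lambdaBetaSet, Finset.sum_union, Finset.sum_biUnion hdisj]
  refine (Finset.disjoint_biUnion_right _ _ _).2 fun j hj => ?_
  rw [Finset.mem_Icc] at hj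
  exact disjoint_progression (by omega) (by omega) (by omega)

theorem card_lambdaBetaSet (hm : 1 ≤ m) (hr1 : 1 ≤ r) (hrt : 2 * r ≤ t) :
    (lambdaBetaSet t m r).card = r * m - 1 := by
  have ht : 0 < t := by omega
  rw [Finset.card_eq_sum_ones, sum_lambdaBetaSet _ ht hrt]
  simp only [Finset.sum_const, smul_eq_mul, mul_one, card_progression ht, Nat.card_Icc]
  have : (r + 1 - 2) * m + m = r * m := by rw [← add_one_mul]; congr 1; omega
  omega

theorem sum_cast_lambdaBetaSet (hm : 1 ≤ m) (hr1 : 1 ≤ r) (hrt : 2 * r ≤ t) :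
    ∑ x ∈ lambdaBetaSet t m r, (x : ℚ) =
      t * ((m - 1) * (m - 2) / 2) + (m - 1) * (t - 1) +
        (r - 1) * (t * (m * (m - 1) / 2) + m * (t + 1)) - m * (r * (r + 1) - 2) := by
  have ht : 0 < t := by omega
  have hIcc : ∑ j ∈ Finset.Icc 2 r, (j : ℚ) = r * (r + 1) / 2 - 1 := by
    rw [← Finset.Ico_add_one_right_eq_Icc, Finset.sum_Ico_eq_sub _ (by omega),
      Finset.sum_range_natCast_id, Finset.sum_range_natCast_id]
    push_cast
    ring
  have hterm : ∀ j ∈ Finset.Icc 2 r, ∑ x ∈ progression t (t + 1 - 2 * j) m, (x : ℚ) =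
      (t * (m * (m - 1) / 2) + m * (t + 1)) - 2 * m * j := by
    intro j hj
    rw [Finset.mem_Icc] at hj
    rw [sum_progression ht, Nat.cast_sub (by omega)]
    push_cast
    ring
  rw [sum_lambdaBetaSet _ ht hrt, sum_progression ht, Finset.sum_congr rfl hterm,
    Finset.sum_sub_distrib, ← Finset.mul_sum, hIcc]
  simp only [Finset.sum_const, Nat.card_Icc, nsmul_eq_mul]
  push_cast [Nat.cast_sub hm, Nat.cast_sub (by omega : 1 ≤ t), Nat.cast_sub hr1]
  ring

end LambdaBetaSet

theorem lambda_r_t_mt_sub_one_general (t m r : ℕ) (hm : 2 ≤ m)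
    (hr1 : 1 ≤ r) (hr2 : r ≤ t / 2) :
    ∃ lam : Partn,
      lam.betaSet = ((Finset.range (m - 1)).image (fun k => k * t + (t - 1))) ∪
        (Finset.Icc 2 r).biUnion
          (fun j => (Finset.range m).image (fun k => k * t + (t + 1 - 2 * j))) ∧
      lam.IsCore t ∧ lam.IsCore (m * t - 1) ∧ lam.DistinctParts ∧
      (lam.size : ℚ) = -(r : ℚ) ^ 2 * ((m : ℚ) ^ 2 + 2 * m) / 2
        + (r : ℚ) * ((m : ℚ) ^ 2 * t + m * t + 3 * m) / 2 - m * t := by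
  have hrt : 2 * r ≤ t := by omega
  have hS := zero_notMem_lambdaBetaSet (m := m) hr1 hrt
  set lam := Partn.ofBetaSet _ hS
  have hlam : lam.betaSet = lambdaBetaSet t m r := Partn.betaSet_ofBetaSet hS
  refine ⟨lam, hlam, ?_, ?_, ?_, ?_⟩
  · exact lam.isCore_of_sub_mem t (hlam ▸ fun _ => sub_mem_lambdaBetaSet (by omega))
  · exact lam.isCore_of_lt _ (hlam ▸ fun _ => lt_of_mem_lambdaBetaSet (by omega) hr1 hrt)
  · exact lam.distinctParts_of_add_one_notMem
      (hlam ▸ fun _ => add_one_notMem_lambdaBetaSet hr1 hrt)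
  · have hsum := lam.sum_betaSet
    rw [hlam, Partn.length_ofBetaSet, card_lambdaBetaSet (by omega) hr1 hrt] at hsum
    have hsumℚ := congrArg (Nat.cast : ℕ → ℚ) hsum
    push_cast at hsumℚ
    rw [sum_cast_lambdaBetaSet (by omega) hr1 hrt, Finset.sum_range_natCast_id,
      Nat.cast_sub (one_le_mul hr1 (by omega)), Nat.cast_mul] at hsumℚ
    linear_combination -hsumℚ

/-- The partition `λ^r` with β-set
`{kt + (t−1) : 0 ≤ k ≤ m−2} ∪ ⋃_(j=2)^r {kt + (t+1−2j) : 0 ≤ k ≤ m−1}` is a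
`(t, mt−1)`-core partition with distinct parts of size
`−r²(m²+2m)/2 + r(m²t+mt+3m)/2 − mt`. -/
theorem lambda_r_t_mt_sub_one (t m r : ℕ) (ht : 4 ≤ t) (hm : 2 ≤ m)
    (hr1 : 1 ≤ r) (hr2 : r ≤ t / 2) :
    ∃ lam : Partn,
      lam.betaSet = ((Finset.range (m - 1)).image (fun k => k * t + (t - 1))) ∪
        (Finset.Icc 2 r).biUnion
          (fun j => (Finset.range m).image (fun k => k * t + (t + 1 - 2 * j))) ∧
      lam.IsCore t ∧ lam.IsCore (m * t - 1) ∧ lam.DistinctParts ∧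
      (lam.size : ℚ) = -(r : ℚ) ^ 2 * ((m : ℚ) ^ 2 + 2 * m) / 2
        + (r : ℚ) * ((m : ℚ) ^ 2 * t + m * t + 3 * m) / 2 - m * t :=
  lambda_r_t_mt_sub_one_general t m r hm hr1 hr2
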